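/- For Re s > 0 and a ∈ [0, π/2), ∫_0^∞ τ sinh((π/2 + a)τ) Γ(s+iτ) Γ(s-iτ) dτ = π Γ(2s+1) 2^{-2s-1} [cos(π/4 + a/2)]^{-2s-1} sin(π/4 + a/2). -/

import Mathlib

/-!
Via `x = sigmoid u`, the Beta integral gives
`Γ(s+it) Γ(s-it) = Γ(2s) ∫ e^{itu} (2 cosh (u/2))^(-2s) du`.
The kernel is holomorphic with exponential decay on the strip `|Im w| < π`; shifting the line of
integration to `Im w = ±b` shows `Γ(s+it) Γ(s-it) = O(e^{-b|t|})` for every `b < π`. Fourier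
inversion then evaluates `∫₀^∞ cos (yτ) Γ(s+iτ) Γ(s-iτ) dτ = π Γ(2s) (2 cosh (y/2))^(-2s)`. Written
with `cos (yτ) = cosh (zτ)`, `z = yi`, both sides are holomorphic in `z` on `|Re z| < π`, so the
identity holds there by the identity theorem, and the theorem is its derivative at `z = π/2 + a`.
-/

open Real MeasureTheory Complex Filter Set
open scoped Topology FourierTransform Interval

theorem Complex.betaIntegral_eq_integral_sigmoid_cpow (p q : ℂ) :
    betaIntegral p q = ∫ u : ℝ, (sigmoid u : ℂ) ^ p * (sigmoid (-u) : ℂ) ^ q := by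
  have hderiv (u : ℝ) (_ : u ∈ univ) :
      HasDerivWithinAt sigmoid (sigmoid u * sigmoid (-u)) univ u := by
    rw [sigmoid_neg]; exact (hasDerivAt_sigmoid u).hasDerivWithinAt
  rw [betaIntegral, intervalIntegral.integral_of_le zero_le_one, integral_Ioc_eq_integral_Ioo,
    ← range_sigmoid, ← image_univ, integral_image_eq_integral_abs_deriv_smul MeasurableSet.univ
      hderiv sigmoid_injective.injOn, Measure.restrict_univ]
  congr 1 with u
  have hσ (x : ℝ) : (sigmoid x : ℂ) ≠ 0 := ofReal_ne_zero.mpr (sigmoid_pos x).ne'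
  have hsub : (1 : ℂ) - sigmoid u = sigmoid (-u) := by rw [sigmoid_neg]; push_cast; ring
  rw [abs_of_pos (mul_pos (sigmoid_pos u) (sigmoid_pos (-u))), hsub, real_smul,
    cpow_sub _ _ (hσ u), cpow_sub _ _ (hσ (-u)), cpow_one, cpow_one]
  push_cast
  field_simp [hσ u, hσ (-u)]

lemma sigmoid_eq_exp_div_two_mul_cosh (u : ℝ) :
    sigmoid u = Real.exp (u / 2) / (2 * Real.cosh (u / 2)) := by
  rw [sigmoid_def, Real.cosh_eq]
  field_simp
  rw [add_mul, one_mul, ← Real.exp_add]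
  ring_nf

lemma ofReal_exp_div_cpow (r : ℝ) {c : ℝ} (hc : 0 < c) (p : ℂ) :
    ((Real.exp r / c : ℝ) : ℂ) ^ p = cexp (r * p) * (c : ℂ) ^ (-p) := by
  rw [cpow_def_of_ne_zero (ofReal_ne_zero.mpr (by positivity)),
    cpow_def_of_ne_zero (ofReal_ne_zero.mpr hc.ne'), ← ofReal_log (by positivity),
    ← ofReal_log hc.le, Real.log_div (Real.exp_pos r).ne' hc.ne', Real.log_exp, ← Complex.exp_add]
  push_cast
  ring_nf

theorem integral_add_mul_I_eq_integral {f : ℂ → ℂ} {b : ℝ}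
    (hf : DifferentiableOn ℂ f (im ⁻¹' [[0, b]]))
    (h₀ : Integrable fun x : ℝ => f x) (hb : Integrable fun x : ℝ => f (x + b * I))
    (hvert : Tendsto (fun x : ℝ => ∫ y in (0 : ℝ)..b, f (x + y * I)) (cocompact ℝ) (𝓝 0)) :
    ∫ x : ℝ, f (x + b * I) = ∫ x : ℝ, f x := by
  have hrect (R : ℝ) : ((∫ x in -R..R, f x) - ∫ x in -R..R, f (x + b * I)) +
      I • (∫ y in (0 : ℝ)..b, f (R + y * I)) - I • (∫ y in (0 : ℝ)..b, f (-R + y * I)) = 0 := by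
    simpa using integral_boundary_rect_eq_zero_of_differentiableOn f (-R) (R + b * I)
      (hf.mono fun z hz => by simpa using hz.2)
  have hright : Tendsto (fun R : ℝ => ∫ y in (0 : ℝ)..b, f (R + y * I)) atTop (𝓝 0) :=
    hvert.mono_left atTop_le_cocompact
  have hleft : Tendsto (fun R : ℝ => ∫ y in (0 : ℝ)..b, f (↑(-R) + y * I)) atTop (𝓝 0) :=
    (hvert.mono_left atBot_le_cocompact).comp tendsto_neg_atTop_atBot
  push_cast at hleft
  have hlim := (((intervalIntegral_tendsto_integral h₀ tendsto_neg_atTop_atBot tendsto_id).sub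
      (intervalIntegral_tendsto_integral hb tendsto_neg_atTop_atBot tendsto_id)).add
      (hright.const_smul I)).sub (hleft.const_smul I)
  simp only [id, hrect, smul_zero, add_zero, sub_zero] at hlim
  exact (sub_eq_zero.mp (tendsto_nhds_unique tendsto_const_nhds hlim).symm).symm

theorem integral_cexp_neg_mul_integral_cexp_mul {f : ℝ → ℂ} (hf : Integrable f)
    (hfc : Continuous f) (hF : Integrable fun t : ℝ => ∫ v : ℝ, cexp (I * t * v) * f v) (u : ℝ) :
    ∫ t : ℝ, cexp (-(I * t * u)) * ∫ v : ℝ, cexp (I * t * v) * f v = 2 * π * f u := by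
  set F := fun t : ℝ => ∫ v : ℝ, cexp (I * t * v) * f v
  have hfourier : 𝓕 f = fun ξ => F (-(2 * π) * ξ) := by
    ext ξ
    rw [Real.fourier_real_eq_integral_exp_smul]
    congr 1 with v
    rw [smul_eq_mul]
    push_cast
    ring_nf
  have hinv := hf.fourierInv_fourier_eq (hfourier ▸ hF.comp_mul_left' (by simp [pi_ne_zero]))
    hfc.continuousAt (v := u)
  rw [Real.fourierInv_eq_fourier_neg, Real.fourier_real_eq_integral_exp_smul, hfourier] at hinv
  have hscale := Measure.integral_comp_mul_left (fun t : ℝ => cexp (-(I * t * u)) * F t) (-(2 * π))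
  rw [abs_inv, abs_neg, abs_of_pos (by positivity : (0 : ℝ) < 2 * π)] at hscale
  calc ∫ t : ℝ, cexp (-(I * t * u)) * F t
      = 2 * π * ((2 * π)⁻¹ • ∫ t : ℝ, cexp (-(I * t * u)) * F t) := by
        rw [real_smul, ← mul_assoc, ← ofReal_ofNat, ← ofReal_mul, ← ofReal_mul,
          mul_inv_cancel₀ (by positivity), ofReal_one, one_mul]
    _ = 2 * π * f u := by
        rw [← hscale, ← hinv]
        congr 2 with ξ
        rw [smul_eq_mul]
        push_cast
        ring_nf

lemma integral_eq_two_mul_integral_Ioi_of_even {h : ℝ → ℂ} (hi : Integrable h)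
    (he : ∀ x, h (-x) = h x) : ∫ x, h x = 2 * ∫ x in Ioi 0, h x := by
  have hneg := integral_comp_neg_Ioi 0 h
  simp only [he, neg_zero] at hneg
  rw [← intervalIntegral.integral_Iic_add_Ioi hi.integrableOn hi.integrableOn, ← hneg, two_mul]

lemma integrable_exp_neg_mul_abs {c : ℝ} (hc : 0 < c) :
    Integrable fun u : ℝ => Real.exp (-c * |u|) := by
  have hIoi : IntegrableOn (fun u : ℝ => Real.exp (-c * |u|)) (Ioi 0) :=
    (exp_neg_integrableOn_Ioi 0 hc).congr_fun (fun u hu => by rw [abs_of_pos hu]) measurableSet_Ioi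
  rw [← integrableOn_univ, ← Iio_union_Ici (a := (0 : ℝ)), integrableOn_union,
    integrableOn_Ici_iff_integrableOn_Ioi,
    ← (Measure.measurePreserving_neg volume).integrableOn_comp_preimage
      (Homeomorph.neg ℝ).measurableEmbedding]
  simpa [Function.comp_def] using hIoi

lemma tendsto_exp_neg_mul_abs_cocompact {c : ℝ} (hc : 0 < c) :
    Tendsto (fun u : ℝ => Real.exp (-c * |u|)) (cocompact ℝ) (𝓝 0) :=
  (Real.tendsto_exp_atBot.comp <| tendsto_neg_atTop_atBot.comp <|
    (tendsto_norm_cocompact_atTop (E := ℝ)).const_mul_atTop hc).congr fun u => by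
      simp [Real.norm_eq_abs]

lemma norm_cexp_I_mul (t : ℝ) (w : ℂ) : ‖cexp (I * t * w)‖ = Real.exp (-(t * w.im)) := by
  simp [norm_exp, mul_re, mul_im]

lemma norm_cosh_le_exp_abs_re (z : ℂ) : ‖Complex.cosh z‖ ≤ Real.exp |z.re| := by
  rw [Complex.cosh, norm_div, RCLike.norm_ofNat]
  have := norm_add_le (cexp z) (cexp (-z))
  rw [norm_exp, norm_exp, neg_re] at this
  linarith [Real.exp_le_exp.mpr (le_abs_self z.re), Real.exp_le_exp.mpr (neg_le_abs z.re)]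

lemma norm_sinh_le_exp_abs_re (z : ℂ) : ‖Complex.sinh z‖ ≤ Real.exp |z.re| := by
  rw [Complex.sinh, norm_div, RCLike.norm_ofNat]
  have := norm_sub_le (cexp z) (cexp (-z))
  rw [norm_exp, norm_exp, neg_re] at this
  linarith [Real.exp_le_exp.mpr (le_abs_self z.re), Real.exp_le_exp.mpr (neg_le_abs z.re)]

theorem hasDerivAt_integral_cosh_mul {g : ℝ → ℂ}
    (hg : AEStronglyMeasurable g (volume.restrict (Ioi 0))) {b C : ℝ}
    (hbound : ∀ τ > 0, ‖g τ‖ ≤ C * Real.exp (-b * τ)) {c : ℂ} (hc : |c.re| < b) :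
    HasDerivAt (fun z : ℂ => ∫ τ in Ioi (0 : ℝ), Complex.cosh (z * τ) * g τ)
      (∫ τ in Ioi (0 : ℝ), τ * Complex.sinh (c * τ) * g τ) c := by
  set ε := (b - |c.re|) / 2
  have hε : 0 < ε := by simp only [ε]; linarith
  have hbε : b - ε = |c.re| + ε := by simp only [ε]; ring
  have hdecay {z : ℂ} (hz : z ∈ Metric.ball c ε) {τ : ℝ} (hτ : 0 < τ) :
      Real.exp |(z * τ).re| * ‖g τ‖ ≤ C * Real.exp (-ε * τ) := by
    have hzc : |z.re| ≤ |c.re| + ε := by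
      have := (abs_re_le_norm (z - c)).trans (mem_ball_iff_norm.mp hz).le
      rw [sub_re] at this
      linarith [abs_sub_abs_le_abs_sub z.re c.re]
    calc Real.exp |(z * τ).re| * ‖g τ‖ ≤ Real.exp ((b - ε) * τ) * (C * Real.exp (-b * τ)) := by
          rw [re_mul_ofReal, abs_mul, abs_of_pos hτ]
          exact mul_le_mul (Real.exp_le_exp.mpr (mul_le_mul_of_nonneg_right (by linarith) hτ.le))
            (hbound τ hτ) (norm_nonneg _) (Real.exp_pos _).le
      _ = C * Real.exp (-ε * τ) := by rw [mul_left_comm, ← Real.exp_add]; ring_nf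
  have hmeas (z : ℂ) : AEStronglyMeasurable (fun τ : ℝ => Complex.cosh (z * τ) * g τ)
      (volume.restrict (Ioi 0)) :=
    (by fun_prop : Continuous fun τ : ℝ => Complex.cosh (z * τ)).aestronglyMeasurable.mul hg
  have hint : Integrable (fun τ : ℝ => Complex.cosh (c * τ) * g τ) (volume.restrict (Ioi 0)) := by
    refine ((exp_neg_integrableOn_Ioi 0 hε).const_mul C).mono' (hmeas c) ?_
    filter_upwards [ae_restrict_mem measurableSet_Ioi] with τ hτ
    rw [norm_mul]
    exact (mul_le_mul_of_nonneg_right (norm_cosh_le_exp_abs_re _) (norm_nonneg _)).trans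
      (by simpa using hdecay (Metric.mem_ball_self hε) hτ)
  have hτexp : IntegrableOn (fun τ : ℝ => τ * Real.exp (-ε * τ)) (Ioi 0) := by
    simpa using integrableOn_rpow_mul_exp_neg_mul_rpow (s := 1) (p := 1) (by norm_num) one_pos hε
  refine (hasDerivAt_integral_of_dominated_loc_of_deriv_le
    (F' := fun z (τ : ℝ) => τ * Complex.sinh (z * τ) * g τ) (Metric.ball_mem_nhds c hε)
    (.of_forall hmeas) hint ((by fun_prop : Continuous fun τ : ℝ => τ * Complex.sinh (c * τ)
      ).aestronglyMeasurable.mul hg) ?_ (hτexp.const_mul C) ?_).2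
  · filter_upwards [ae_restrict_mem measurableSet_Ioi] with τ hτ z hz
    rw [norm_mul, norm_mul, norm_real, Real.norm_of_nonneg hτ.le, mul_assoc, mul_left_comm C]
    exact mul_le_mul_of_nonneg_left ((mul_le_mul_of_nonneg_right (norm_sinh_le_exp_abs_re _)
      (norm_nonneg _)).trans (hdecay hz hτ)) hτ.le
  · refine .of_forall fun τ z _ => ?_
    have hlin : HasDerivAt (fun x : ℂ => x * τ) τ z := by
      simpa using (hasDerivAt_id z).mul_const (τ : ℂ)
    exact (hlin.ccosh.mul_const (g τ)).congr_deriv (by ring)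

lemma frequently_re_eq_zero : ∃ᶠ z in 𝓝[≠] (0 : ℂ), z.re = 0 := by
  have h : Tendsto (fun y : ℝ => (y : ℂ) * I) (𝓝[≠] 0) (𝓝[≠] 0) := by
    refine tendsto_nhdsWithin_of_tendsto_nhds_of_eventually_within _ ?_ ?_
    · exact ((by fun_prop : Continuous fun y : ℝ => (y : ℂ) * I).tendsto' 0 0 (by simp)).mono_left
        nhdsWithin_le_nhds
    · exact eventually_nhdsWithin_of_forall fun y hy => by simpa using hy
  exact h.frequently (.of_forall fun y => by simp)

noncomputable def coshKernel (s w : ℂ) : ℂ := (2 * Complex.cosh (w / 2)) ^ (-(2 * s))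

section coshKernel

lemma re_two_mul_cosh_half (u y : ℝ) :
    (2 * Complex.cosh ((u + y * I) / 2)).re = 2 * Real.cosh (u / 2) * Real.cos (y / 2) := by
  have : ((u : ℂ) + y * I) / 2 = ((u / 2 : ℝ) : ℂ) + ((y / 2 : ℝ) : ℂ) * I := by push_cast; ring
  rw [this, Complex.cosh_add, Complex.cosh_mul_I, Complex.sinh_mul_I, ← ofReal_cosh, ← ofReal_cos,
    ← ofReal_sinh, ← ofReal_sin]
  simp only [mul_re, add_re, mul_im, ofReal_re, ofReal_im, I_re, I_im, re_ofNat, im_ofNat]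
  ring

lemma two_mul_cosh_half_mem_slitPlane {w : ℂ} (hw : |w.im| < π) :
    2 * Complex.cosh (w / 2) ∈ slitPlane := by
  refine mem_slitPlane_iff.mpr (Or.inl ?_)
  rw [← re_add_im w, re_two_mul_cosh_half]
  have : 0 < Real.cos (w.im / 2) :=
    Real.cos_pos_of_mem_Ioo ⟨by linarith [neg_abs_le w.im], by linarith [le_abs_self w.im]⟩
  positivity

lemma exp_abs_half_le_two_mul_cosh_half (u : ℝ) :
    Real.exp (|u| / 2) ≤ 2 * Real.cosh (u / 2) := by
  rw [← Real.cosh_abs (u / 2), abs_div, abs_two, Real.cosh_eq]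
  linarith [Real.exp_pos (-(|u| / 2))]

variable (s : ℂ)

lemma coshKernel_neg (w : ℂ) : coshKernel s (-w) = coshKernel s w := by
  rw [coshKernel, coshKernel, neg_div, Complex.cosh_neg]

lemma hasDerivAt_coshKernel {w : ℂ} (hw : |w.im| < π) :
    HasDerivAt (coshKernel s)
      (-(2 * s) * (2 * Complex.cosh (w / 2)) ^ (-(2 * s) - 1) * Complex.sinh (w / 2)) w :=
  ((((hasDerivAt_id w).div_const 2).ccosh.const_mul 2).cpow_const
    (two_mul_cosh_half_mem_slitPlane hw)).congr_deriv (by simp only [id]; ring)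

lemma differentiableAt_coshKernel {w : ℂ} (hw : |w.im| < π) :
    DifferentiableAt ℂ (coshKernel s) w :=
  (hasDerivAt_coshKernel s hw).differentiableAt

lemma continuous_coshKernel_ofReal : Continuous fun u : ℝ => coshKernel s u :=
  continuous_iff_continuousAt.mpr fun u =>
    ((differentiableAt_coshKernel s (by simpa using pi_pos)).continuousAt).comp
      continuous_ofReal.continuousAt

variable {s}

lemma norm_coshKernel_le (hs : 0 ≤ s.re) {b y : ℝ} (hb : b < π) (hy : |y| ≤ b) (u : ℝ) :
    ‖coshKernel s (u + y * I)‖ ≤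
      Real.exp (π * |s.im|) * Real.cos (b / 2) ^ (-2 * s.re) * Real.exp (-s.re * |u|) := by
  set z := 2 * Complex.cosh ((u + y * I) / 2)
  have hcos : 0 < Real.cos (b / 2) :=
    Real.cos_pos_of_mem_Ioo ⟨by linarith [abs_nonneg y], by linarith⟩
  have hcosy : Real.cos (b / 2) ≤ Real.cos (y / 2) := by
    rw [← Real.cos_abs (y / 2), abs_div, abs_two]
    exact Real.cos_le_cos_of_nonneg_of_le_pi (by positivity) (by linarith [abs_nonneg y])
      (by linarith)
  have hre : Real.exp (|u| / 2) * Real.cos (b / 2) ≤ z.re := by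
    rw [re_two_mul_cosh_half]
    exact mul_le_mul (exp_abs_half_le_two_mul_cosh_half u) hcosy hcos.le (by positivity)
  have hz : 0 < z.re := lt_of_lt_of_le (by positivity) hre
  have harg : 2 * (arg z * s.im) ≤ π * |s.im| :=
    calc 2 * (arg z * s.im) ≤ 2 * (|arg z| * |s.im|) := by
          rw [← abs_mul]; gcongr; exact le_abs_self _
      _ ≤ 2 * (π / 2 * |s.im|) := by gcongr; exact abs_arg_le_pi_div_two_iff.mpr hz.le
      _ = π * |s.im| := by ring
  have hnorm : ‖z‖ ^ (-2 * s.re) ≤ (Real.exp (|u| / 2) * Real.cos (b / 2)) ^ (-2 * s.re) :=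
    Real.rpow_le_rpow_of_nonpos (mul_pos (Real.exp_pos _) hcos) (hre.trans (re_le_norm z))
      (by linarith)
  rw [coshKernel, norm_cpow_of_ne_zero (slitPlane_ne_zero (mem_slitPlane_iff.mpr (Or.inl hz))),
    show (-(2 * s)).re = -2 * s.re by simp, show (-(2 * s)).im = -2 * s.im by simp,
    div_eq_mul_inv, ← Real.exp_neg]
  calc ‖z‖ ^ (-2 * s.re) * Real.exp (-(arg z * (-2 * s.im)))
      ≤ (Real.exp (|u| / 2) * Real.cos (b / 2)) ^ (-2 * s.re) * Real.exp (π * |s.im|) :=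
        mul_le_mul hnorm (Real.exp_le_exp.mpr (by linarith)) (by positivity) (by positivity)
    _ = _ := by
        rw [Real.mul_rpow (by positivity) hcos.le, ← Real.exp_mul]
        ring_nf

lemma norm_cexp_mul_coshKernel_le (hs : 0 ≤ s.re) (t : ℝ) {b y : ℝ} (hb : b < π) (hy : |y| ≤ b)
    (u : ℝ) :
    ‖cexp (I * t * (u + y * I)) * coshKernel s (u + y * I)‖ ≤ Real.exp (-(t * y)) *
      (Real.exp (π * |s.im|) * Real.cos (b / 2) ^ (-2 * s.re) * Real.exp (-s.re * |u|)) := by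
  rw [norm_mul, norm_cexp_I_mul]
  simpa using mul_le_mul_of_nonneg_left (norm_coshKernel_le hs hb hy u) (Real.exp_pos _).le

lemma integrable_cexp_mul_coshKernel (hs : 0 < s.re) (t : ℝ) {y : ℝ} (hy : |y| < π) :
    Integrable fun u : ℝ => cexp (I * t * (u + y * I)) * coshKernel s (u + y * I) := by
  refine ((integrable_exp_neg_mul_abs hs).const_mul _).mono' ?_ (.of_forall fun u =>
    (norm_cexp_mul_coshKernel_le hs.le t hy le_rfl u).trans_eq (mul_assoc _ _ _).symm)
  refine Continuous.aestronglyMeasurable (continuous_iff_continuousAt.mpr fun u => ?_)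
  exact (by fun_prop : Continuous fun u : ℝ => cexp (I * t * (u + y * I))).continuousAt.mul
    ((differentiableAt_coshKernel s (by simpa using hy)).continuousAt.comp (by fun_prop))

lemma integral_cexp_mul_coshKernel_add_mul_I (hs : 0 < s.re) (t : ℝ) {b : ℝ} (hb : |b| < π) :
    ∫ u : ℝ, cexp (I * t * (u + b * I)) * coshKernel s (u + b * I) =
      ∫ u : ℝ, cexp (I * t * u) * coshKernel s u := by
  have h₀ := integrable_cexp_mul_coshKernel hs t (y := 0) (by simpa using pi_pos)
  simp only [ofReal_zero, zero_mul, add_zero] at h₀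
  refine integral_add_mul_I_eq_integral (f := fun w => cexp (I * t * w) * coshKernel s w)
    (fun w hw => ?_) h₀ (integrable_cexp_mul_coshKernel hs t hb) ?_
  · have hw' : |w.im| < π := by
      have := abs_sub_left_of_mem_uIcc hw
      rw [sub_zero, sub_zero] at this
      exact this.trans_lt hb
    exact ((by fun_prop : Differentiable ℂ fun w => cexp (I * t * w)) w).mul
      (differentiableAt_coshKernel s hw') |>.differentiableWithinAt
  have hvert (x : ℝ) : ‖∫ y in (0 : ℝ)..b, cexp (I * t * (x + y * I)) * coshKernel s (x + y * I)‖ ≤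
      Real.exp (|t| * |b|) * (Real.exp (π * |s.im|) * Real.cos (|b| / 2) ^ (-2 * s.re)) *
        Real.exp (-s.re * |x|) * |b - 0| := by
    refine intervalIntegral.norm_integral_le_of_norm_le_const fun y hy => ?_
    have hyb : |y| ≤ |b| := by simpa using abs_sub_left_of_mem_uIcc (uIoc_subset_uIcc hy)
    refine (norm_cexp_mul_coshKernel_le hs.le t hb hyb x).trans ?_
    have hcos : 0 < Real.cos (|b| / 2) :=
      Real.cos_pos_of_mem_Ioo ⟨by linarith [abs_nonneg b, pi_pos], by linarith⟩
    rw [← mul_assoc]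
    gcongr
    calc -(t * y) ≤ |t * y| := neg_le_abs _
      _ ≤ |t| * |b| := by rw [abs_mul]; gcongr
  refine squeeze_zero_norm hvert ?_
  simpa using ((tendsto_exp_neg_mul_abs_cocompact hs).const_mul (Real.exp (|t| * |b|) *
    (Real.exp (π * |s.im|) * Real.cos (|b| / 2) ^ (-2 * s.re)))).mul_const |b|

end coshKernel

section GammaProduct

variable {s : ℂ}

lemma Gamma_mul_Gamma_eq_integral_coshKernel (hs : 0 < s.re) (t : ℝ) :
    Gamma (s + I * t) * Gamma (s - I * t) =
      Gamma (2 * s) * ∫ u : ℝ, cexp (I * t * u) * coshKernel s u := by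
  rw [Gamma_mul_Gamma_eq_betaIntegral (by simpa using hs) (by simpa using hs),
    betaIntegral_eq_integral_sigmoid_cpow, show s + I * t + (s - I * t) = 2 * s by ring]
  congr 2 with u
  have hc : 0 < 2 * Real.cosh (u / 2) := by positivity
  rw [sigmoid_eq_exp_div_two_mul_cosh, sigmoid_eq_exp_div_two_mul_cosh, ofReal_exp_div_cpow _ hc,
    ofReal_exp_div_cpow _ (by rwa [neg_div, Real.cosh_neg]), neg_div, Real.cosh_neg, coshKernel,
    mul_mul_mul_comm, ← Complex.exp_add, ← cpow_add _ _ (ofReal_ne_zero.mpr hc.ne')]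
  push_cast
  ring_nf

lemma exists_norm_Gamma_mul_Gamma_le (hs : 0 < s.re) {b : ℝ} (hb₀ : 0 ≤ b) (hb : b < π) :
    ∃ C, ∀ t : ℝ, ‖Gamma (s + I * t) * Gamma (s - I * t)‖ ≤ C * Real.exp (-b * |t|) := by
  set M := Real.exp (π * |s.im|) * Real.cos (b / 2) ^ (-2 * s.re)
  refine ⟨‖Gamma (2 * s)‖ * (M * ∫ u : ℝ, Real.exp (-s.re * |u|)), fun t => ?_⟩
  -- Integrate along `Im w = ± b`, with the sign of `t`, where `|e^{itw}| = e^{-b|t|}`.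
  obtain ⟨y, hy, hty⟩ : ∃ y : ℝ, |y| ≤ b ∧ t * y = b * |t| := by
    rcases le_total 0 t with ht | ht
    · exact ⟨b, (abs_of_nonneg hb₀).le, by rw [abs_of_nonneg ht, mul_comm]⟩
    · exact ⟨-b, by rw [abs_neg, abs_of_nonneg hb₀], by rw [abs_of_nonpos ht]; ring⟩
  rw [Gamma_mul_Gamma_eq_integral_coshKernel hs,
    ← integral_cexp_mul_coshKernel_add_mul_I hs t (hy.trans_lt hb), norm_mul]
  calc _ ≤ ‖Gamma (2 * s)‖ * ∫ u : ℝ, Real.exp (-(t * y)) * (M * Real.exp (-s.re * |u|)) := by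
        gcongr
        exact norm_integral_le_of_norm_le
          (((integrable_exp_neg_mul_abs hs).const_mul M).const_mul _)
          (.of_forall (norm_cexp_mul_coshKernel_le hs.le t hb hy))
    _ = _ := by rw [integral_const_mul, integral_const_mul, hty]; ring_nf

lemma continuous_Gamma_mul_Gamma (hs : 0 < s.re) :
    Continuous fun t : ℝ => Gamma (s + I * t) * Gamma (s - I * t) := by
  have hΓ (z : ℂ) (hz : 0 < z.re) : ContinuousAt Complex.Gamma z :=
    (differentiableAt_Gamma z fun m hm => by simp [hm] at hz; linarith).continuousAt
  refine continuous_iff_continuousAt.mpr fun t => ContinuousAt.mul ?_ ?_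
  · exact (hΓ _ (by simpa using hs)).comp (by fun_prop)
  · exact (hΓ _ (by simpa using hs)).comp (by fun_prop)

lemma integrable_cexp_mul_Gamma_mul_Gamma (hs : 0 < s.re) (u : ℝ) :
    Integrable fun t : ℝ => cexp (I * t * u) * (Gamma (s + I * t) * Gamma (s - I * t)) := by
  obtain ⟨C, hC⟩ := exists_norm_Gamma_mul_Gamma_le hs zero_le_one (by linarith [pi_gt_three])
  refine ((integrable_exp_neg_mul_abs one_pos).const_mul C).mono'
    ((by fun_prop : Continuous fun t : ℝ => cexp (I * t * u)).mul
      (continuous_Gamma_mul_Gamma hs)).aestronglyMeasurable (.of_forall fun t => ?_)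
  rw [norm_mul, norm_cexp_I_mul]
  simpa using hC t

lemma integral_cexp_mul_Gamma_mul_Gamma (hs : 0 < s.re) (u : ℝ) :
    ∫ t : ℝ, cexp (I * t * u) * (Gamma (s + I * t) * Gamma (s - I * t)) =
      2 * π * Gamma (2 * s) * coshKernel s u := by
  have hΓ : Gamma (2 * s) ≠ 0 := Gamma_ne_zero_of_re_pos (by simpa using hs)
  have hF (t : ℝ) : ∫ v : ℝ, cexp (I * t * v) * coshKernel s v =
      (Gamma (2 * s))⁻¹ * (Gamma (s + I * t) * Gamma (s - I * t)) := by
    rw [Gamma_mul_Gamma_eq_integral_coshKernel hs, inv_mul_cancel_left₀ hΓ]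
  have hφ : Integrable fun u : ℝ => coshKernel s u := by
    simpa using integrable_cexp_mul_coshKernel hs 0 (y := 0) (by simpa using pi_pos)
  have hg : Integrable fun t : ℝ => Gamma (s + I * t) * Gamma (s - I * t) := by
    simpa using integrable_cexp_mul_Gamma_mul_Gamma hs 0
  have hinv := integral_cexp_neg_mul_integral_cexp_mul hφ (continuous_coshKernel_ofReal s)
    ((hg.const_mul _).congr (.of_forall fun t => (hF t).symm)) (-u)
  rw [ofReal_neg, coshKernel_neg] at hinv
  calc _ = Gamma (2 * s) * ∫ t : ℝ, cexp (-(I * t * ↑(-u))) *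
        ∫ v : ℝ, cexp (I * t * v) * coshKernel s v := by
        rw [← integral_const_mul]
        congr 1 with t
        rw [hF, mul_left_comm _ (Gamma (2 * s))⁻¹, mul_inv_cancel_left₀ hΓ]
        push_cast
        ring_nf
    _ = _ := by rw [ofReal_neg, hinv]; ring

lemma integral_cosh_mul_Gamma_mul_Gamma_of_re_eq_zero (hs : 0 < s.re) {z : ℂ} (hz : z.re = 0) :
    ∫ τ in Ioi (0 : ℝ), Complex.cosh (z * τ) * (Gamma (s + I * τ) * Gamma (s - I * τ)) =
      π * Gamma (2 * s) * coshKernel s (I * z) := by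
  obtain ⟨y, rfl⟩ : ∃ y : ℝ, z = y * I := ⟨z.im, by simpa [hz] using (re_add_im z).symm⟩
  set g := fun τ : ℝ => Gamma (s + I * τ) * Gamma (s - I * τ)
  have hcosh (τ : ℝ) : Complex.cosh (y * I * τ) * g τ =
      (cexp (I * τ * y) * g τ + cexp (I * τ * ↑(-y)) * g τ) / 2 := by
    rw [Complex.cosh]; push_cast; ring_nf
  have hint : Integrable fun τ : ℝ => Complex.cosh (y * I * τ) * g τ := by
    simp_rw [hcosh]
    exact ((integrable_cexp_mul_Gamma_mul_Gamma hs y).add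
      (integrable_cexp_mul_Gamma_mul_Gamma hs (-y))).div_const 2
  have heven (τ : ℝ) :
      Complex.cosh (y * I * ↑(-τ)) * g (-τ) = Complex.cosh (y * I * τ) * g τ := by
    simp only [g, ofReal_neg, mul_neg, Complex.cosh_neg, ← sub_eq_add_neg, sub_neg_eq_add]
    ring
  have hfull : ∫ τ : ℝ, Complex.cosh (y * I * τ) * g τ =
      2 * π * Gamma (2 * s) * coshKernel s y := by
    simp_rw [hcosh]
    rw [integral_div, integral_add (integrable_cexp_mul_Gamma_mul_Gamma hs y)
      (integrable_cexp_mul_Gamma_mul_Gamma hs (-y)), integral_cexp_mul_Gamma_mul_Gamma hs,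
      integral_cexp_mul_Gamma_mul_Gamma hs, ofReal_neg, coshKernel_neg]
    ring
  rw [integral_eq_two_mul_integral_Ioi_of_even hint heven] at hfull
  rw [show I * (y * I) = -y by ring_nf; simp, coshKernel_neg]
  linear_combination hfull / 2

theorem integral_cosh_mul_Gamma_mul_Gamma (hs : 0 < s.re) {z : ℂ} (hz : |z.re| < π) :
    ∫ τ in Ioi (0 : ℝ), Complex.cosh (z * τ) * (Gamma (s + I * τ) * Gamma (s - I * τ)) =
      π * Gamma (2 * s) * coshKernel s (I * z) := by
  set U : Set ℂ := re ⁻¹' Ioo (-π) π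
  have hU : IsOpen U := isOpen_Ioo.preimage continuous_re
  have hmem {w : ℂ} : w ∈ U ↔ |w.re| < π := by simp [U, abs_lt]
  have hL : AnalyticOnNhd ℂ (fun z : ℂ => ∫ τ in Ioi (0 : ℝ),
      Complex.cosh (z * τ) * (Gamma (s + I * τ) * Gamma (s - I * τ))) U := by
    refine DifferentiableOn.analyticOnNhd (fun w hw => ?_) hU
    have hw := hmem.mp hw
    obtain ⟨C, hC⟩ := exists_norm_Gamma_mul_Gamma_le hs (b := (|w.re| + π) / 2) (by positivity)
      (by linarith)
    exact (hasDerivAt_integral_cosh_mul (continuous_Gamma_mul_Gamma hs).aestronglyMeasurable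
      (fun τ hτ => by simpa [abs_of_pos hτ] using hC τ)
      (by linarith)).differentiableAt.differentiableWithinAt
  have hR : AnalyticOnNhd ℂ (fun z : ℂ => π * Gamma (2 * s) * coshKernel s (I * z)) U := by
    refine DifferentiableOn.analyticOnNhd (fun w hw => ?_) hU
    exact (((differentiableAt_coshKernel s (by simpa using hmem.mp hw)).comp w
      (differentiableAt_id.const_mul I)).const_mul _).differentiableWithinAt
  exact hL.eqOn_of_preconnected_of_frequently_eq hR
    ((convex_Ioo (-π) π).linear_preimage reLm).isPreconnected (by simp [U, pi_pos])
    (frequently_re_eq_zero.mono fun z hz => integral_cosh_mul_Gamma_mul_Gamma_of_re_eq_zero hs hz)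
    (hmem.mpr hz)

lemma hasDerivAt_coshKernel_I_mul (s : ℂ) {c : ℝ} (hc : |c| < π) :
    HasDerivAt (fun z => coshKernel s (I * z)) (2 * s * (2 : ℂ) ^ (-(2 * s + 1)) *
      (Real.cos (c / 2) : ℂ) ^ (-(2 * s + 1)) * Real.sin (c / 2)) c := by
  have hcos : 0 ≤ Real.cos (c / 2) :=
    Real.cos_nonneg_of_mem_Icc ⟨by linarith [neg_abs_le c], by linarith [le_abs_self c]⟩
  rw [mul_assoc _ ((2 : ℂ) ^ _), ← ofReal_ofNat, ← mul_cpow_ofReal_nonneg zero_le_two hcos,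
    ofReal_ofNat]
  have h := (hasDerivAt_coshKernel s (w := I * c) (by simpa using hc)).comp (c : ℂ)
    ((hasDerivAt_id (c : ℂ)).const_mul I)
  refine h.congr_deriv ?_
  rw [show I * c / 2 = (c / 2 : ℝ) * I by push_cast; ring, Complex.cosh_mul_I, Complex.sinh_mul_I,
    ← ofReal_cos, ← ofReal_sin, show -(2 * s) - 1 = -(2 * s + 1) by ring]
  linear_combination (-(2 * s) * (2 * (Real.cos (c / 2) : ℂ)) ^ (-(2 * s + 1)) *
    Real.sin (c / 2)) * I_sq

end GammaProduct

theorem stmt16 (s : ℂ) (hs : 0 < s.re) (a : ℝ) (ha : a ∈ Set.Ico 0 (Real.pi / 2)) :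
    ∫ τ in Set.Ioi (0:ℝ), (τ : ℂ) * (Real.sinh ((Real.pi / 2 + a) * τ) : ℂ) *
        Complex.Gamma (s + Complex.I * (τ : ℂ)) * Complex.Gamma (s - Complex.I * (τ : ℂ)) =
      (Real.pi : ℂ) * Complex.Gamma (2 * s + 1) * (2 : ℂ) ^ (-(2 * s + 1)) *
        ((Real.cos (Real.pi / 4 + a / 2) : ℂ)) ^ (-(2 * s + 1)) *
        (Real.sin (Real.pi / 4 + a / 2) : ℂ) := by
  obtain ⟨ha₀, ha₁⟩ := ha
  set c : ℝ := π / 2 + a with hc_def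
  have hc₀ : 0 < c := by positivity
  have hc : |c| < π := by rw [abs_of_pos hc₀]; linarith
  obtain ⟨C, hC⟩ := exists_norm_Gamma_mul_Gamma_le hs (b := (c + π) / 2) (by positivity)
    (by linarith)
  have hL := hasDerivAt_integral_cosh_mul (continuous_Gamma_mul_Gamma hs).aestronglyMeasurable
    (fun τ hτ => by simpa [abs_of_pos hτ] using hC τ) (c := c)
    (by rw [ofReal_re, abs_of_pos hc₀]; linarith)
  have hEq : (fun z : ℂ => ∫ τ in Ioi (0 : ℝ),
      Complex.cosh (z * τ) * (Gamma (s + I * τ) * Gamma (s - I * τ))) =ᶠ[𝓝 (c : ℂ)]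
      fun z => π * Gamma (2 * s) * coshKernel s (I * z) :=
    eventually_of_mem ((isOpen_lt (continuous_abs.comp continuous_re) continuous_const).mem_nhds
      (show |(c : ℂ).re| < π by simpa using hc)) fun z hz => integral_cosh_mul_Gamma_mul_Gamma hs hz
  have hderiv := (hL.congr_of_eventuallyEq hEq.symm).unique
    ((hasDerivAt_coshKernel_I_mul s hc).const_mul (π * Gamma (2 * s)))
  rw [Complex.Gamma_add_one _ (mul_ne_zero two_ne_zero fun h => by simp [h] at hs),
    show π / 4 + a / 2 = c / 2 by rw [hc_def]; ring]
  calc _ = ∫ τ in Ioi (0 : ℝ),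
        τ * Complex.sinh (c * τ) * (Gamma (s + I * τ) * Gamma (s - I * τ)) := by
        push_cast; simp only [mul_assoc]
    _ = _ := by rw [hderiv]; ring
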